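/- arXiv:2505.10700 — 9 statements merged into one kernel-verified Lean document; each statement's English description precedes it below -/
import Mathlib

section
/- InqLTL satisfiability reduces to LTL satisfiability: an InqLTL formula φ has a nonempty model under the team semantics if and only if it has a singleton model, that is, there exists a nonempty team L with L ⊨ φ if and only if there exists a trace w with {w} ⊨ φ. -/
/-- A trace over the set `AP` of atomic propositions. -/
abbrev Trace (AP : Type) := ℕ → Set AP

/-- A team: a set of traces. -/
abbrev Team (AP : Type) := Set (Trace AP)

/-- The suffix `w≥i` of a trace. -/
def Trace.shift {AP : Type} (w : Trace AP) (i : ℕ) : Trace AP := fun j => w (i + j)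

/-- The suffix team `L≥i`. -/
def Team.shift {AP : Type} (L : Team AP) (i : ℕ) : Team AP := (fun w => Trace.shift w i) '' L

/-- InqLTL formulas over `AP`. -/
inductive InqForm (AP : Type) : Type where
  | bot
  | atom (p : AP)
  | or (φ ψ : InqForm AP)
  | and (φ ψ : InqForm AP)
  | imp (φ ψ : InqForm AP)
  | next (φ : InqForm AP)
  | untl (φ ψ : InqForm AP)
  | rel (φ ψ : InqForm AP)

/-- Team satisfaction for InqLTL. -/
def InqForm.sat {AP : Type} : InqForm AP → Team AP → Prop
  | .bot, L => L = ∅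
  | .atom p, L => ∀ w ∈ L, p ∈ w 0
  | .or φ ψ, L => φ.sat L ∨ ψ.sat L
  | .and φ ψ, L => φ.sat L ∧ ψ.sat L
  | .imp φ ψ, L => ∀ L' ⊆ L, φ.sat L' → ψ.sat L'
  | .next φ, L => φ.sat (L.shift 1)
  | .untl φ ψ, L => ∃ i, ψ.sat (L.shift i) ∧ ∀ k < i, φ.sat (L.shift k)
  | .rel φ ψ, L => ∀ i, ψ.sat (L.shift i) ∨ ∃ k < i, φ.sat (L.shift k)

/-! Team satisfaction is downward closed, so a nonempty model contains a singleton model. -/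

theorem Team.shift_mono {AP : Type} (i : ℕ) : Monotone fun L : Team AP => L.shift i :=
  fun _ _ h => Set.image_mono h

theorem InqForm.sat_antitone {AP : Type} (φ : InqForm AP) : Antitone φ.sat := by
  induction φ with
  | bot => exact fun _ _ h hL => Set.subset_eq_empty h hL
  | atom p => exact fun _ _ h hL w hw => hL w (h hw)
  | or φ ψ ihφ ihψ => exact fun _ _ h => Or.imp (ihφ h) (ihψ h)
  | and φ ψ ihφ ihψ => exact fun _ _ h => And.imp (ihφ h) (ihψ h)
  | imp φ ψ _ _ => exact fun _ _ h hL L' hL' => hL L' (hL'.trans h)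
  | next φ ih => exact fun _ _ h => ih (Team.shift_mono 1 h)
  | untl φ ψ ihφ ihψ =>
    rintro _ _ h ⟨i, hψ, hφ⟩
    exact ⟨i, ihψ (Team.shift_mono i h) hψ, fun k hk => ihφ (Team.shift_mono k h) (hφ k hk)⟩
  | rel φ ψ ihφ ihψ =>
    intro _ _ h hL i
    exact (hL i).imp (ihψ (Team.shift_mono i h))
      fun ⟨k, hk, hφ⟩ => ⟨k, hk, ihφ (Team.shift_mono k h) hφ⟩

theorem inqLTL_sat_iff_singleton_sat_general {AP : Type} (φ : InqForm AP) :
    (∃ L : Team AP, L.Nonempty ∧ φ.sat L) ↔ (∃ w : Trace AP, φ.sat ({w} : Team AP)) := by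
  constructor
  · rintro ⟨L, ⟨w, hw⟩, hL⟩
    exact ⟨w, φ.sat_antitone (Set.singleton_subset_iff.mpr hw) hL⟩
  · rintro ⟨w, hw⟩
    exact ⟨{w}, Set.singleton_nonempty w, hw⟩

/-- InqLTL satisfiability reduces to LTL satisfiability: an InqLTL
formula has a nonempty model iff it has a singleton model. -/
theorem inqLTL_sat_iff_singleton_sat {AP : Type} [Fintype AP] (φ : InqForm AP) :
    (∃ L : Team AP, L.Nonempty ∧ φ.sat L) ↔ (∃ w : Trace AP, φ.sat ({w} : Team AP)) :=
  inqLTL_sat_iff_singleton_sat_general φ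
end

section
/- For every InqLTL(~) formula φ and every team L, L ⊨ ¬¬φ if and only if for each trace w ∈ L, the singleton team {w} satisfies φ. -/
/-- InqLTL(~) formulas over `AP`: InqLTL extended with Boolean negation `~`. -/
inductive InqFormN (AP : Type) : Type where
  | bot
  | atom (p : AP)
  | or (φ ψ : InqFormN AP)
  | and (φ ψ : InqFormN AP)
  | imp (φ ψ : InqFormN AP)
  | bneg (φ : InqFormN AP)
  | next (φ : InqFormN AP)
  | untl (φ ψ : InqFormN AP)
  | rel (φ ψ : InqFormN AP)

/-- Team satisfaction for InqLTL(~). -/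
def InqFormN.sat {AP : Type} : InqFormN AP → Team AP → Prop
  | .bot, L => L = ∅
  | .atom p, L => ∀ w ∈ L, p ∈ w 0
  | .or φ ψ, L => φ.sat L ∨ ψ.sat L
  | .and φ ψ, L => φ.sat L ∧ ψ.sat L
  | .imp φ ψ, L => ∀ L' ⊆ L, φ.sat L' → ψ.sat L'
  | .bneg φ, L => ¬ φ.sat L
  | .next φ, L => φ.sat (L.shift 1)
  | .untl φ ψ, L => ∃ i, ψ.sat (L.shift i) ∧ ∀ k < i, φ.sat (L.shift k)
  | .rel φ ψ, L => ∀ i, ψ.sat (L.shift i) ∨ ∃ k < i, φ.sat (L.shift k)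

/-- Intuitionistic negation `¬φ := φ → ⊥`. -/
def InqFormN.neg {AP : Type} (φ : InqFormN AP) : InqFormN AP := .imp φ .bot

/-- For every InqLTL(~) formula `φ` and team `L`,
`L ⊨ ¬¬φ` iff every singleton subteam of `L` satisfies `φ`. -/
theorem inqLTLN_double_neg_characterization {AP : Type} [Fintype AP]
    (φ : InqFormN AP) (L : Team AP) :
    φ.neg.neg.sat L ↔ ∀ w ∈ L, φ.sat ({w} : Team AP) := by
  simp only [InqFormN.neg, InqFormN.sat]
  constructor
  · intro h w hw
    by_contra hφ
    have := h {w} (Set.singleton_subset_iff.mpr hw) (fun L'' hsub hs => by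
      rcases Set.subset_singleton_iff_eq.mp hsub with rfl | rfl
      · rfl
      · exact absurd hs hφ)
    exact Set.singleton_ne_empty w this
  · intro h L' hL' hneg
    by_contra hne
    obtain ⟨w, hw⟩ := Set.nonempty_iff_ne_empty.mpr hne
    exact Set.singleton_ne_empty w
      (hneg {w} (Set.singleton_subset_iff.mpr hw) (h w (hL' hw)))
end

section
/- Countable model property for InqLTL(~): for every InqLTL(~) formula φ and every uncountable team L_u with L_u ⊨ φ, there exists a countable team L_c ⊆ L_u such that L_c ⊨ φ and, moreover, every team L with L_c ⊆ L ⊆ L_u satisfies φ. -/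
/-!
Every team property expressible in InqLTL(~) is decided, below a given team `B`, by countably
many traces of `B`: there is a countable `C ⊆ B` such that all teams between `C` and `B` agree
with `B` on the formula. Atoms and `⊥` are universal statements about the traces of a team, so a
single counterexample (if any) decides them. Boolean and temporal connectives combine only
countably many truth values of subformulas on the suffix teams `L≥i`, so the union of the
countable witnesses decides them. For `φ → ψ` failing on `B`, one fixes a subteam `L' ⊆ B` with
`L' ⊨ φ` and `L' ⊭ ψ`; the witnesses `C` deciding `φ` and `ψ` on `L'` then refute the
implication on every `L ⊇ C`, through its subteam `L ∩ L'`.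
-/

open Set

def CountablyDetermined {α : Type*} (P : Set α → Prop) (B : Set α) : Prop :=
  ∃ C ⊆ B, C.Countable ∧ ∀ L, C ⊆ L → L ⊆ B → (P L ↔ P B)

namespace CountablyDetermined

variable {α β : Type*} {B : Set α}

theorem forall_mem (Q : α → Prop) : CountablyDetermined (fun L => ∀ w ∈ L, Q w) B := by
  by_cases hB : ∀ w ∈ B, Q w
  · exact ⟨∅, empty_subset B, countable_empty,
      fun L _ hLB => iff_of_true (fun w hw => hB w (hLB hw)) hB⟩
  · obtain ⟨w, hwB, hw⟩ := not_forall₂.mp hB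
    exact ⟨{w}, singleton_subset_iff.mpr hwB, countable_singleton w,
      fun L hCL _ => iff_of_false (fun hL => hw (hL w (hCL rfl))) hB⟩

theorem comp {ι : Type*} [Countable ι] {P : ι → Set α → Prop}
    (h : ∀ i, CountablyDetermined (P i) B) (g : (ι → Prop) → Prop) :
    CountablyDetermined (fun L => g fun i => P i L) B := by
  choose C hCB hC hP using h
  refine ⟨⋃ i, C i, iUnion_subset hCB, countable_iUnion hC, fun L hCL hLB => ?_⟩
  have hPL : (fun i => P i L) = fun i => P i B :=
    funext fun i => propext (hP i L ((subset_iUnion C i).trans hCL) hLB)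
  dsimp only
  rw [hPL]

theorem comp₂ {ι κ : Type*} [Countable ι] [Countable κ] {P : ι → Set α → Prop}
    {Q : κ → Set α → Prop} (hP : ∀ i, CountablyDetermined (P i) B)
    (hQ : ∀ j, CountablyDetermined (Q j) B) (g : (ι → Prop) → (κ → Prop) → Prop) :
    CountablyDetermined (fun L => g (fun i => P i L) (fun j => Q j L)) B :=
  comp (P := fun k L => Sum.elim (P · L) (Q · L) k) (Sum.forall.mpr ⟨hP, hQ⟩)
    fun v => g (v ∘ Sum.inl) (v ∘ Sum.inr)

theorem image {P : Set β → Prop} (f : α → β) (h : CountablyDetermined P (f '' B)) :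
    CountablyDetermined (fun L => P (f '' L)) B := by
  obtain ⟨C', hC'B, hC', hP⟩ := h
  have := hC'.to_subtype
  choose g hgB hfg using fun y : C' => hC'B y.2
  exact ⟨range g, range_subset_iff.mpr hgB, countable_range g, fun L hCL hLB =>
    hP _ (fun y hy => ⟨g ⟨y, hy⟩, hCL (mem_range_self _), hfg ⟨y, hy⟩⟩) (image_mono hLB)⟩

theorem forall_subset {P Q : Set α → Prop} (hP : ∀ L ⊆ B, CountablyDetermined P L)
    (hQ : ∀ L ⊆ B, CountablyDetermined Q L) :
    CountablyDetermined (fun L => ∀ L' ⊆ L, P L' → Q L') B := by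
  by_cases hB : ∀ L' ⊆ B, P L' → Q L'
  · exact ⟨∅, empty_subset B, countable_empty,
      fun L _ hLB => iff_of_true (fun L' hL' => hB L' (hL'.trans hLB)) hB⟩
  · obtain ⟨L', hL'B, hPL', hQL'⟩ : ∃ L' ⊆ B, P L' ∧ ¬ Q L' := by
      simpa only [not_forall, exists_prop] using hB
    obtain ⟨C₁, hC₁, hC₁c, hP'⟩ := hP L' hL'B
    obtain ⟨C₂, hC₂, hC₂c, hQ'⟩ := hQ L' hL'B
    refine ⟨C₁ ∪ C₂, (union_subset hC₁ hC₂).trans hL'B, hC₁c.union hC₂c,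
      fun L hCL _ => iff_of_false (fun hL => ?_) hB⟩
    have hC : C₁ ∪ C₂ ⊆ L ∩ L' := subset_inter hCL (union_subset hC₁ hC₂)
    have hPL : P (L ∩ L') := (hP' _ (subset_union_left.trans hC) inter_subset_right).mpr hPL'
    exact hQL' ((hQ' _ (subset_union_right.trans hC) inter_subset_right).mp
      (hL _ inter_subset_left hPL))

end CountablyDetermined

open CountablyDetermined in
theorem InqFormN.countablyDetermined_sat {AP : Type} (φ : InqFormN AP) (B : Team AP) :
    CountablyDetermined φ.sat B := by
  induction φ generalizing B with
  | bot =>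
    simpa only [InqFormN.sat, eq_empty_iff_forall_notMem] using forall_mem (fun _ => False)
  | atom p => exact forall_mem (fun w : Trace AP => p ∈ w 0)
  | or φ ψ ihφ ihψ =>
    exact comp₂ (ι := Unit) (κ := Unit) (fun _ => ihφ B) (fun _ => ihψ B) fun p q => p () ∨ q ()
  | and φ ψ ihφ ihψ =>
    exact comp₂ (ι := Unit) (κ := Unit) (fun _ => ihφ B) (fun _ => ihψ B) fun p q => p () ∧ q ()
  | imp φ ψ ihφ ihψ => exact forall_subset (fun L _ => ihφ L) (fun L _ => ihψ L)
  | bneg φ ih => exact comp (ι := Unit) (fun _ => ih B) fun p => ¬ p ()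
  | next φ ih => exact image _ (ih _)
  | untl φ ψ ihφ ihψ =>
    exact comp₂ (fun i => image _ (ihφ (B.shift i))) (fun i => image _ (ihψ (B.shift i)))
      fun p q => ∃ i, q i ∧ ∀ k < i, p k
  | rel φ ψ ihφ ihψ =>
    exact comp₂ (fun i => image _ (ihφ (B.shift i))) (fun i => image _ (ihψ (B.shift i)))
      fun p q => ∀ i, q i ∨ ∃ k < i, p k

theorem inqLTLN_countable_model_property_general {AP : Type}
    (φ : InqFormN AP) (Lu : Team AP) (hsat : φ.sat Lu) :
    ∃ Lc : Team AP, Lc ⊆ Lu ∧ Lc.Countable ∧ φ.sat Lc ∧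
      ∀ L : Team AP, Lc ⊆ L → L ⊆ Lu → φ.sat L := by
  obtain ⟨C, hCLu, hC, hdet⟩ := φ.countablyDetermined_sat Lu
  exact ⟨C, hCLu, hC, (hdet C subset_rfl hCLu).mpr hsat,
    fun L hCL hLLu => (hdet L hCL hLLu).mpr hsat⟩

/-- Countable model property for InqLTL(~). -/
theorem inqLTLN_countable_model_property {AP : Type} [Fintype AP]
    (φ : InqFormN AP) (Lu : Team AP) (huncount : ¬ Lu.Countable) (hsat : φ.sat Lu) :
    ∃ Lc : Team AP, Lc ⊆ Lu ∧ Lc.Countable ∧ φ.sat Lc ∧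
      ∀ L : Team AP, Lc ⊆ L → L ⊆ Lu → φ.sat L :=
  inqLTLN_countable_model_property_general φ Lu hsat
end

section
/- The InqLTL formula card≤1 := ⋀_{p ∈ AP} G(p ⊕ ¬p), where G φ := ⊥ R φ and ¬φ := φ → ⊥, characterizes the teams of cardinality at most one: for every team L, L ⊨ card≤1 if and only if L has at most one element. -/
/-- Intuitionistic negation `¬φ := φ → ⊥`. -/
def InqForm.neg {AP : Type} (φ : InqForm AP) : InqForm AP := .imp φ .bot

/-- The always modality `G φ := ⊥ R φ`. -/
def InqForm.always {AP : Type} (φ : InqForm AP) : InqForm AP := .rel .bot φ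

/-- The formula `card≤1 := ⋀_{p ∈ AP} G (p ⊕ ¬p)` (the empty conjunction is the
tautology `⊥ → ⊥`). -/
noncomputable def cardLE1 (AP : Type) [Fintype AP] : InqForm AP :=
  (Finset.univ : Finset AP).toList.foldr
    (fun p acc => .and (InqForm.always (.or (.atom p) (InqForm.neg (.atom p)))) acc)
    (InqForm.neg .bot)


lemma sat_fold {AP : Type} (l : List AP) (L : Team AP) :
    (l.foldr
      (fun p acc => .and (InqForm.always (.or (.atom p) (InqForm.neg (.atom p)))) acc)
      (InqForm.neg .bot)).sat L ↔
    ∀ p ∈ l, (InqForm.always (.or (.atom p) (InqForm.neg (.atom p)))).sat L := by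
  induction l with
  | nil =>
    simp only [List.foldr_nil, List.not_mem_nil, false_implies, implies_true, iff_true,
      InqForm.neg, InqForm.sat]
    intro L' _ h; exact h
  | cons a t ih =>
    simp [InqForm.sat, ih]

lemma mem_shift {AP : Type} {L : Team AP} {w : Trace AP} (hw : w ∈ L) (i : ℕ) :
    w.shift i ∈ L.shift i := ⟨w, hw, rfl⟩

/-- `card≤1` characterizes the teams of cardinality at most one. -/
theorem cardLE1_characterization {AP : Type} [Fintype AP] (L : Team AP) :
    (cardLE1 AP).sat L ↔ L.Subsingleton := by
  rw [cardLE1, sat_fold]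
  constructor
  · intro h w hw w' hw'
    funext i
    ext p
    have hp := h p (by simp) i
    rcases hp with hp | ⟨k, _, hk⟩
    · rcases hp with hp | hp
      · simp only [InqForm.sat] at hp
        have h1 := hp _ (mem_shift hw i)
        have h2 := hp _ (mem_shift hw' i)
        simp [Trace.shift] at h1 h2
        simp [h1, h2]
      · simp only [InqForm.neg, InqForm.sat] at hp
        constructor
        · intro hpi
          have := hp {w.shift i} (by intro x hx; simp at hx; subst hx; exact mem_shift hw i)
            (by intro v hv; simp at hv; subst hv; simpa [Trace.shift] using hpi)
          simp at this
        · intro hpi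
          have := hp {w'.shift i} (by intro x hx; simp at hx; subst hx; exact mem_shift hw' i)
            (by intro v hv; simp at hv; subst hv; simpa [Trace.shift] using hpi)
          simp at this
    · simp only [InqForm.sat] at hk
      exact absurd hk (by
        intro he
        have : w.shift k ∈ L.shift k := mem_shift hw k
        rw [he] at this
        exact this)
  · intro hL p _
    intro i
    left
    by_cases hc : ∃ v ∈ L.shift i, p ∉ v 0
    · right
      obtain ⟨v, hv, hpv⟩ := hc
      intro L' hsub hatom
      ext u
      simp only [Set.mem_empty_iff_false, iff_false]
      intro hu
      have hsh : (L.shift i).Subsingleton := Set.Subsingleton.image hL _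
      have : u = v := hsh (hsub hu) hv
      exact hpv (this ▸ hatom u hu)
    · left
      push_neg at hc
      exact hc
end

section
/- Dependence atoms are expressible in InqLTL: for all InqLTL formulas φ1, ..., φn, ψ and every team L, the following are equivalent: (1) for all traces w, w' ∈ L, if the single-trace LTL truth values of φ1, ..., φn agree on w and w', then the single-trace LTL truth values of ψ agree on w and w'; (2) L ⊨ [⋀_{i=1}^{n} (¬φi ⊕ ¬¬φi)] → (¬ψ ⊕ ¬¬ψ), where ¬φ := φ → ⊥. -/
/-- Standard single-trace LTL satisfaction. -/
def InqForm.ltlSat {AP : Type} : InqForm AP → Trace AP → Prop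
  | .bot, _ => False
  | .atom p, w => p ∈ w 0
  | .or φ ψ, w => φ.ltlSat w ∨ ψ.ltlSat w
  | .and φ ψ, w => φ.ltlSat w ∧ ψ.ltlSat w
  | .imp φ ψ, w => φ.ltlSat w → ψ.ltlSat w
  | .next φ, w => φ.ltlSat (w.shift 1)
  | .untl φ ψ, w => ∃ i, ψ.ltlSat (w.shift i) ∧ ∀ k < i, φ.ltlSat (w.shift k)
  | .rel φ ψ, w => ∀ i, ψ.ltlSat (w.shift i) ∨ ∃ k < i, φ.ltlSat (w.shift k)

/-- The InqLTL formula `[⋀_{i=1}^{n} (¬φi ⊕ ¬¬φi)] → (¬ψ ⊕ ¬¬ψ)` expressing the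
dependence atom `dep(φ1,...,φn,ψ)` (the empty conjunction is the tautology `⊥ → ⊥`). -/
def depForm {AP : Type} (n : ℕ) (φs : Fin n → InqForm AP) (ψ : InqForm AP) : InqForm AP :=
  .imp
    ((List.ofFn φs).foldr
      (fun φ acc => .and (.or φ.neg φ.neg.neg) acc) (InqForm.neg .bot))
    (.or ψ.neg ψ.neg.neg)

/-!
Team semantics of InqLTL is downward closed and agrees with LTL on singleton teams. Hence `¬φ`
holds on a team iff `φ` is false on each of its traces, `¬¬φ` iff `φ` is true on each of them, and
`¬φ ⊕ ¬¬φ` holds iff all traces of the team give `φ` the same truth value. The implication then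
says that every subteam on which the `φi` are constant has `ψ` constant too, and testing this
on two-element subteams recovers the pairwise dependence condition.
-/

namespace InqForm

variable {AP : Type}

lemma sat_empty (φ : InqForm AP) : φ.sat ∅ := by
  induction φ with
  | bot => rfl
  | atom p => exact fun _ hw => hw.elim
  | or φ ψ ih _ => exact Or.inl ih
  | and φ ψ ih₁ ih₂ => exact ⟨ih₁, ih₂⟩
  | imp φ ψ _ ih =>
    intro L' hL' _
    rwa [Set.subset_empty_iff.mp hL']
  | next φ ih => simpa [sat, Team.shift] using ih
  | untl φ ψ _ ih => exact ⟨0, by simpa [Team.shift] using ih, fun k hk => absurd hk k.not_lt_zero⟩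
  | rel φ ψ _ ih => exact fun i => Or.inl (by simpa [Team.shift] using ih)

lemma sat_mono (φ : InqForm AP) {L L' : Team AP} (h : L' ⊆ L) (hL : φ.sat L) : φ.sat L' := by
  induction φ generalizing L L' with
  | bot => exact Set.subset_empty_iff.mp (hL ▸ h)
  | atom p => exact fun w hw => hL w (h hw)
  | or _ _ ih₁ ih₂ => exact hL.imp (ih₁ h) (ih₂ h)
  | and _ _ ih₁ ih₂ => exact ⟨ih₁ h hL.1, ih₂ h hL.2⟩
  | imp _ _ _ _ => exact fun L'' h'' => hL L'' (h''.trans h)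
  | next _ ih => exact ih (Set.image_mono h) hL
  | untl _ _ ih₁ ih₂ =>
    obtain ⟨i, hi, hk⟩ := hL
    exact ⟨i, ih₂ (Set.image_mono h) hi, fun k hk' => ih₁ (Set.image_mono h) (hk k hk')⟩
  | rel _ _ ih₁ ih₂ =>
    intro i
    exact (hL i).imp (ih₂ (Set.image_mono h)) fun ⟨k, hk, hφ⟩ => ⟨k, hk, ih₁ (Set.image_mono h) hφ⟩

lemma sat_singleton_iff (φ : InqForm AP) (w : Trace AP) : φ.sat {w} ↔ φ.ltlSat w := by
  induction φ generalizing w with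
  | imp φ ψ ih₁ ih₂ =>
    constructor
    · exact fun h hφ => (ih₂ w).1 (h {w} subset_rfl ((ih₁ w).2 hφ))
    · intro h L' hL' hφ
      rcases Set.subset_singleton_iff_eq.mp hL' with rfl | rfl
      · exact sat_empty ψ
      · exact (ih₂ w).2 (h ((ih₁ w).1 hφ))
  | _ => simp_all [sat, ltlSat, Team.shift]

lemma sat_neg_iff (φ : InqForm AP) (L : Team AP) : φ.neg.sat L ↔ ∀ w ∈ L, ¬φ.ltlSat w := by
  constructor
  · intro h w hw hφ
    exact Set.singleton_ne_empty w <|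
      h {w} (Set.singleton_subset_iff.mpr hw) ((sat_singleton_iff φ w).2 hφ)
  · intro h L' hL' hφ
    refine Set.eq_empty_iff_forall_notMem.mpr fun w hw => h w (hL' hw) ?_
    exact (sat_singleton_iff φ w).1 (sat_mono φ (Set.singleton_subset_iff.mpr hw) hφ)

lemma sat_neg_neg_iff (φ : InqForm AP) (L : Team AP) : φ.neg.neg.sat L ↔ ∀ w ∈ L, φ.ltlSat w := by
  rw [sat_neg_iff]
  simp [neg, ltlSat]

lemma sat_or_neg_neg_neg_iff (φ : InqForm AP) (L : Team AP) :
    (InqForm.or φ.neg φ.neg.neg).sat L ↔ ∀ w ∈ L, ∀ w' ∈ L, (φ.ltlSat w ↔ φ.ltlSat w') := by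
  rw [sat, sat_neg_iff, sat_neg_neg_iff]
  constructor
  · rintro (h | h) w hw w' hw' <;> simp [h w hw, h w' hw']
  · intro h
    by_cases hall : ∀ w ∈ L, φ.ltlSat w
    · exact Or.inr hall
    · push Not at hall
      obtain ⟨w₀, hw₀, hφ₀⟩ := hall
      exact Or.inl fun w hw hφ => hφ₀ ((h w hw w₀ hw₀).1 hφ)

lemma sat_foldr_and_iff (l : List (InqForm AP)) (L : Team AP) :
    (l.foldr (fun φ acc => .and (.or φ.neg φ.neg.neg) acc) (InqForm.neg .bot)).sat L ↔
      ∀ φ ∈ l, (InqForm.or φ.neg φ.neg.neg).sat L := by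
  induction l with
  | nil => simp [sat_neg_iff, ltlSat]
  | cons φ l ih => simp [sat, ih]

end InqForm

lemma forall_pair_dependence_iff_forall_subset {α ι : Type*} (L : Set α) (f : ι → α → Prop)
    (g : α → Prop) :
    (∀ w ∈ L, ∀ w' ∈ L, (∀ i, (f i w ↔ f i w')) → (g w ↔ g w')) ↔
      ∀ L' ⊆ L, (∀ i, ∀ w ∈ L', ∀ w' ∈ L', (f i w ↔ f i w')) →
        ∀ w ∈ L', ∀ w' ∈ L', (g w ↔ g w') := by
  constructor
  · exact fun h L' hL' hf w hw w' hw' => h w (hL' hw) w' (hL' hw') fun i => hf i w hw w' hw'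
  · intro h w hw w' hw' hf
    have hpair : ∀ x ∈ ({w, w'} : Set α), ∀ y ∈ ({w, w'} : Set α), ∀ P : α → Prop,
        (P w ↔ P w') → (P x ↔ P y) := by
      rintro x (rfl | rfl) y (rfl | rfl) P hP <;> simp [hP]
    exact h {w, w'} (Set.insert_subset hw (Set.singleton_subset_iff.mpr hw'))
      (fun i x hx y hy => hpair x hx y hy _ (hf i)) w (by simp) w' (by simp)

theorem dep_atom_expressible_general {AP : Type} (n : ℕ)
    (φs : Fin n → InqForm AP) (ψ : InqForm AP) (L : Team AP) :
    (∀ w ∈ L, ∀ w' ∈ L,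
        (∀ i : Fin n, ((φs i).ltlSat w ↔ (φs i).ltlSat w')) →
        (ψ.ltlSat w ↔ ψ.ltlSat w'))
      ↔ (depForm n φs ψ).sat L := by
  rw [forall_pair_dependence_iff_forall_subset, depForm, InqForm.sat]
  simp only [InqForm.sat_foldr_and_iff, List.forall_mem_ofFn_iff, InqForm.sat_or_neg_neg_neg_iff]

/-- Dependence atoms are expressible in InqLTL. -/
theorem dep_atom_expressible {AP : Type} [Fintype AP] (n : ℕ)
    (φs : Fin n → InqForm AP) (ψ : InqForm AP) (L : Team AP) :
    (∀ w ∈ L, ∀ w' ∈ L,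
        (∀ i : Fin n, ((φs i).ltlSat w ↔ (φs i).ltlSat w')) →
        (ψ.ltlSat w ↔ ψ.ltlSat w'))
      ↔ (depForm n φs ψ).sat L :=
  dep_atom_expressible_general n φs ψ L
end

section
/- Normal form for InqLTL(~): every InqLTL(~) formula is equivalent to an InqLTL(~) formula in normal form, i.e., one generated by the grammar φ ::= ⊥ | ~⊥ | p | ~p | φ ⊕ φ | φ ∧ φ | A φ | E φ | X φ | φ U φ | φ R φ, where equivalence means satisfaction by exactly the same teams. -/
/-- Formulas of InqLTL(~) extended with the subteam quantifiers `A` and `E`. -/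
inductive Form (AP : Type) : Type where
  | bot
  | atom (p : AP)
  | or (φ ψ : Form AP)
  | and (φ ψ : Form AP)
  | imp (φ ψ : Form AP)
  | bneg (φ : Form AP)
  | all (φ : Form AP)
  | ex (φ : Form AP)
  | next (φ : Form AP)
  | untl (φ ψ : Form AP)
  | rel (φ ψ : Form AP)

/-- Team satisfaction. -/
def Form.sat {AP : Type} : Form AP → Team AP → Prop
  | .bot, L => L = ∅
  | .atom p, L => ∀ w ∈ L, p ∈ w 0
  | .or φ ψ, L => φ.sat L ∨ ψ.sat L
  | .and φ ψ, L => φ.sat L ∧ ψ.sat L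
  | .imp φ ψ, L => ∀ L' ⊆ L, φ.sat L' → ψ.sat L'
  | .bneg φ, L => ¬ φ.sat L
  | .all φ, L => ∀ L' ⊆ L, φ.sat L'
  | .ex φ, L => ∃ L' ⊆ L, φ.sat L'
  | .next φ, L => φ.sat (L.shift 1)
  | .untl φ ψ, L => ∃ i, ψ.sat (L.shift i) ∧ ∀ k < i, φ.sat (L.shift k)
  | .rel φ ψ, L => ∀ i, ψ.sat (L.shift i) ∨ ∃ k < i, φ.sat (L.shift k)

/-- InqLTL(~) formulas: those not using the subteam quantifiers `A` and `E`. -/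
def Form.isInq {AP : Type} : Form AP → Prop
  | .bot => True
  | .atom _ => True
  | .or φ ψ => φ.isInq ∧ ψ.isInq
  | .and φ ψ => φ.isInq ∧ ψ.isInq
  | .imp φ ψ => φ.isInq ∧ ψ.isInq
  | .bneg φ => φ.isInq
  | .all _ => False
  | .ex _ => False
  | .next φ => φ.isInq
  | .untl φ ψ => φ.isInq ∧ ψ.isInq
  | .rel φ ψ => φ.isInq ∧ ψ.isInq

/-- Normal form: generated by
`φ ::= ⊥ | ~⊥ | p | ~p | φ ⊕ φ | φ ∧ φ | A φ | E φ | X φ | φ U φ | φ R φ`. -/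
def Form.isNormal {AP : Type} : Form AP → Prop
  | .bot => True
  | .atom _ => True
  | .bneg .bot => True
  | .bneg (.atom _) => True
  | .bneg _ => False
  | .or φ ψ => φ.isNormal ∧ ψ.isNormal
  | .and φ ψ => φ.isNormal ∧ ψ.isNormal
  | .imp _ _ => False
  | .all φ => φ.isNormal
  | .ex φ => φ.isNormal
  | .next φ => φ.isNormal
  | .untl φ ψ => φ.isNormal ∧ ψ.isNormal
  | .rel φ ψ => φ.isNormal ∧ ψ.isNormal

theorem normal_form_aux {AP : Type} (φ : Form AP) (hφ : φ.isInq) :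
    ∃ α β : Form AP, α.isNormal ∧ β.isNormal ∧
      (∀ L : Team AP, φ.sat L ↔ α.sat L) ∧ (∀ L : Team AP, ¬ φ.sat L ↔ β.sat L) := by
  induction φ with
  | bot =>
    exact ⟨.bot, .bneg .bot, trivial, trivial, fun L => Iff.rfl, fun L => Iff.rfl⟩
  | atom p =>
    exact ⟨.atom p, .bneg (.atom p), trivial, trivial, fun L => Iff.rfl, fun L => Iff.rfl⟩
  | or φ ψ ihφ ihψ =>
    obtain ⟨a1, b1, na1, nb1, h1, g1⟩ := ihφ hφ.1
    obtain ⟨a2, b2, na2, nb2, h2, g2⟩ := ihψ hφ.2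
    refine ⟨.or a1 a2, .and b1 b2, ⟨na1, na2⟩, ⟨nb1, nb2⟩, fun L => ?_, fun L => ?_⟩
    · simp only [Form.sat, h1, h2]
    · simp only [Form.sat, ← g1, ← g2]; tauto
  | and φ ψ ihφ ihψ =>
    obtain ⟨a1, b1, na1, nb1, h1, g1⟩ := ihφ hφ.1
    obtain ⟨a2, b2, na2, nb2, h2, g2⟩ := ihψ hφ.2
    refine ⟨.and a1 a2, .or b1 b2, ⟨na1, na2⟩, ⟨nb1, nb2⟩, fun L => ?_, fun L => ?_⟩
    · simp only [Form.sat, h1, h2]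
    · simp only [Form.sat, ← g1, ← g2]; tauto
  | imp φ ψ ihφ ihψ =>
    obtain ⟨a1, b1, na1, nb1, h1, g1⟩ := ihφ hφ.1
    obtain ⟨a2, b2, na2, nb2, h2, g2⟩ := ihψ hφ.2
    refine ⟨.all (.or b1 a2), .ex (.and a1 b2), ⟨nb1, na2⟩, ⟨na1, nb2⟩,
      fun L => ?_, fun L => ?_⟩
    · simp only [Form.sat, ← g1, ← h2]
      constructor
      · intro h L' hL'; rcases Classical.em (Form.sat φ L') with hc | hc
        · exact Or.inr (h L' hL' hc)
        · exact Or.inl hc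
      · intro h L' hL' hc; rcases h L' hL' with hd | hd
        · exact absurd hc hd
        · exact hd
    · simp only [Form.sat, ← h1, ← g2]
      push_neg
      constructor
      · rintro ⟨L', hL', h1', h2'⟩; exact ⟨L', hL', h1', h2'⟩
      · rintro ⟨L', hL', h1', h2'⟩; exact ⟨L', hL', h1', h2'⟩
  | bneg φ ihφ =>
    obtain ⟨a1, b1, na1, nb1, h1, g1⟩ := ihφ hφ
    refine ⟨b1, a1, nb1, na1, fun L => ?_, fun L => ?_⟩
    · simpa only [Form.sat] using g1 L
    · simp only [Form.sat, not_not]; exact h1 L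
  | all φ _ => exact absurd hφ (by simp [Form.isInq])
  | ex φ _ => exact absurd hφ (by simp [Form.isInq])
  | next φ ihφ =>
    obtain ⟨a1, b1, na1, nb1, h1, g1⟩ := ihφ hφ
    refine ⟨.next a1, .next b1, na1, nb1, fun L => ?_, fun L => ?_⟩
    · simp only [Form.sat, h1]
    · simp only [Form.sat, ← g1]
  | untl φ ψ ihφ ihψ =>
    obtain ⟨a1, b1, na1, nb1, h1, g1⟩ := ihφ hφ.1
    obtain ⟨a2, b2, na2, nb2, h2, g2⟩ := ihψ hφ.2
    refine ⟨.untl a1 a2, .rel b1 b2, ⟨na1, na2⟩, ⟨nb1, nb2⟩, fun L => ?_, fun L => ?_⟩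
    · simp only [Form.sat, h1, h2]
    · simp only [Form.sat, ← g1, ← g2]
      push_neg
      constructor
      · intro h i; rcases Classical.em (Form.sat ψ (L.shift i)) with hc | hc
        · exact Or.inr (h i hc)
        · exact Or.inl hc
      · intro h i hc; rcases h i with hd | hd
        · exact absurd hc hd
        · exact hd
  | rel φ ψ ihφ ihψ =>
    obtain ⟨a1, b1, na1, nb1, h1, g1⟩ := ihφ hφ.1
    obtain ⟨a2, b2, na2, nb2, h2, g2⟩ := ihψ hφ.2
    refine ⟨.rel a1 a2, .untl b1 b2, ⟨na1, na2⟩, ⟨nb1, nb2⟩, fun L => ?_, fun L => ?_⟩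
    · simp only [Form.sat, h1, h2]
    · simp only [Form.sat, ← g1, ← g2]
      push_neg
      constructor
      · rintro ⟨i, hi1, hi2⟩; exact ⟨i, hi1, hi2⟩
      · rintro ⟨i, hi1, hi2⟩; exact ⟨i, hi1, hi2⟩

/-- every InqLTL(~) formula is equivalent to a formula in normal form. -/
theorem inqLTLN_normal_form {AP : Type} [Fintype AP] (φ : Form AP) (hφ : φ.isInq) :
    ∃ ψ : Form AP, ψ.isNormal ∧ ∀ L : Team AP, φ.sat L ↔ ψ.sat L := by
  obtain ⟨α, _, hα, _, h, _⟩ := normal_form_aux φ hφ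
  exact ⟨α, hα, h⟩
end

section
/- The macro-path semantics of InqLTL is downward closed: for every Kripke structure K, every InqLTL formula φ, and all macro-paths ρ, ρ' of K with ρ ⊑ ρ', if ρ' ⊨_K φ under the macro-path semantics then ρ ⊨_K φ. -/
/-- A Kripke structure over `AP` with states `S`: a set of initial states, a
left-total transition relation, and a labelling of states by propositions. -/
structure Kripke (AP S : Type) where
  init : Set S
  R : S → S → Prop
  leftTotal : ∀ s, ∃ s', R s s'
  lab : S → Set AP

/-- A path of `K`. -/
def Kripke.IsPath {AP S : Type} (K : Kripke AP S) (π : ℕ → S) : Prop :=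
  ∀ i, K.R (π i) (π (i + 1))

/-- `T'` is a successor macro-state of `T`. -/
def Kripke.MSucc {AP S : Type} (K : Kripke AP S) (T T' : Set S) : Prop :=
  (∀ s ∈ T, ∃ s' ∈ T', K.R s s') ∧ (∀ s' ∈ T', ∃ s ∈ T, K.R s s')

/-- A macro-path of `K`: an infinite sequence of macro-states, each a successor
of the previous one. -/
def Kripke.IsMacroPath {AP S : Type} (K : Kripke AP S) (ρ : ℕ → Set S) : Prop :=
  ∀ i, K.MSucc (ρ i) (ρ (i + 1))

/-- `Paths_K(ρ)`: the set of paths of `K` encoded by the macro-path `ρ`. -/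
def Kripke.PathsIn {AP S : Type} (K : Kripke AP S) (ρ : ℕ → Set S) : Set (ℕ → S) :=
  {π | K.IsPath π ∧ ∀ i, π i ∈ ρ i}

/-- The suffix `ρ≥i` of a macro-path. -/
def mshift {S : Type} (ρ : ℕ → Set S) (i : ℕ) : ℕ → Set S := fun j => ρ (i + j)

/-- The macro-path semantics `ρ ⊨_K φ` of InqLTL. -/
def Kripke.msat {AP S : Type} (K : Kripke AP S) : InqForm AP → (ℕ → Set S) → Prop
  | .bot, ρ => K.PathsIn ρ = ∅
  | .atom p, ρ => ∀ s ∈ ρ 0, p ∈ K.lab s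
  | .or φ ψ, ρ => K.msat φ ρ ∨ K.msat ψ ρ
  | .and φ ψ, ρ => K.msat φ ρ ∧ K.msat ψ ρ
  | .imp φ ψ, ρ =>
      ∀ ρ', K.IsMacroPath ρ' → (∀ i, ρ' i ⊆ ρ i) → K.msat φ ρ' → K.msat ψ ρ'
  | .next φ, ρ => K.msat φ (mshift ρ 1)
  | .untl φ ψ, ρ => ∃ i, K.msat ψ (mshift ρ i) ∧ ∀ k < i, K.msat φ (mshift ρ k)
  | .rel φ ψ, ρ => ∀ i, K.msat ψ (mshift ρ i) ∨ ∃ k < i, K.msat φ (mshift ρ k)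

/-- the macro-path semantics of InqLTL is downward closed. -/
theorem msat_downward_closed {AP S : Type} [Fintype AP] (K : Kripke AP S)
    (φ : InqForm AP) (ρ ρ' : ℕ → Set S)
    (hρ : K.IsMacroPath ρ) (hρ' : K.IsMacroPath ρ')
    (hsub : ∀ i, ρ i ⊆ ρ' i) (h : K.msat φ ρ') : K.msat φ ρ := by
  induction φ generalizing ρ ρ' with
  | bot =>
      simp only [Kripke.msat] at h ⊢
      rw [Set.eq_empty_iff_forall_notMem] at h ⊢
      intro π hπ
      exact h π ⟨hπ.1, fun i => hsub i (hπ.2 i)⟩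
  | atom p => exact fun s hs => h s (hsub 0 hs)
  | or φ ψ ihφ ihψ =>
      rcases h with h | h
      · exact Or.inl (ihφ ρ ρ' hρ hρ' hsub h)
      · exact Or.inr (ihψ ρ ρ' hρ hρ' hsub h)
  | and φ ψ ihφ ihψ =>
      exact ⟨ihφ ρ ρ' hρ hρ' hsub h.1, ihψ ρ ρ' hρ hρ' hsub h.2⟩
  | imp φ ψ ihφ ihψ =>
      intro ρ'' hρ'' hsub'' hφ
      exact h ρ'' hρ'' (fun i => (hsub'' i).trans (hsub i)) hφ
  | next φ ih =>
      exact ih (mshift ρ 1) (mshift ρ' 1) (fun i => hρ (1 + i)) (fun i => hρ' (1 + i))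
        (fun i => hsub (1 + i)) h
  | untl φ ψ ihφ ihψ =>
      obtain ⟨i, h1, h2⟩ := h
      exact ⟨i, ihψ _ _ (fun j => hρ (i + j)) (fun j => hρ' (i + j)) (fun j => hsub (i + j)) h1,
        fun k hk => ihφ _ _ (fun j => hρ (k + j)) (fun j => hρ' (k + j)) (fun j => hsub (k + j))
          (h2 k hk)⟩
  | rel φ ψ ihφ ihψ =>
      intro i
      rcases h i with h | ⟨k, hk, h⟩
      · exact Or.inl (ihψ _ _ (fun j => hρ (i + j)) (fun j => hρ' (i + j))
          (fun j => hsub (i + j)) h)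
      · exact Or.inr ⟨k, hk, ihφ _ _ (fun j => hρ (k + j)) (fun j => hρ' (k + j))
          (fun j => hsub (k + j)) h⟩
end

section
/- For every Kripke structure K and every positive InqLTL formula φ, and for every set Π of paths of K: Π ⊨_K φ (i.e., the team of traces induced by Π satisfies φ under the InqLTL team semantics) if and only if mp(Π) ⊨_K φ under the macro-path semantics, where mp(Π) is the macro-path with mp(Π)(i) = { π(i) | π ∈ Π }. -/
/-- Positive InqLTL formulas: `φ ::= ⊥ | p | ¬p | φ ⊕ φ | φ ∧ φ | X φ | φ U φ | φ R φ`,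
where `¬p` abbreviates `p → ⊥`. -/
def InqForm.isPositive {AP : Type} : InqForm AP → Prop
  | .bot => True
  | .atom _ => True
  | .imp (.atom _) .bot => True
  | .imp _ _ => False
  | .or φ ψ => φ.isPositive ∧ ψ.isPositive
  | .and φ ψ => φ.isPositive ∧ ψ.isPositive
  | .next φ => φ.isPositive
  | .untl φ ψ => φ.isPositive ∧ ψ.isPositive
  | .rel φ ψ => φ.isPositive ∧ ψ.isPositive

/-- The trace induced by a path of `K`. -/
def Kripke.traceOf {AP S : Type} (K : Kripke AP S) (π : ℕ → S) : Trace AP :=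
  fun i => K.lab (π i)

/-- `L_K(Π)`: the team of traces induced by a set of paths of `K`. -/
def Kripke.teamOf {AP S : Type} (K : Kripke AP S) (Ps : Set (ℕ → S)) : Team AP :=
  K.traceOf '' Ps

/-- `mp(Π)`: the macro-path abstracting a set `Π` of paths. -/
def mp {S : Type} (Ps : Set (ℕ → S)) : ℕ → Set S := fun i => (fun π => π i) '' Ps

/-- Shift a set of paths. -/
def pshift {S : Type} (Ps : Set (ℕ → S)) (i : ℕ) : Set (ℕ → S) :=
  (fun π => fun j => π (i + j)) '' Ps

lemma teamOf_pshift {AP S : Type} (K : Kripke AP S) (Ps : Set (ℕ → S)) (i : ℕ) :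
    (K.teamOf Ps).shift i = K.teamOf (pshift Ps i) := by
  simp [Team.shift, Kripke.teamOf, pshift, Set.image_image]
  rfl

lemma mp_pshift {S : Type} (Ps : Set (ℕ → S)) (i : ℕ) :
    mp (pshift Ps i) = mshift (mp Ps) i := by
  funext j
  simp [mp, pshift, mshift, Set.image_image]

lemma pshift_paths {AP S : Type} (K : Kripke AP S) {Ps : Set (ℕ → S)}
    (hPs : ∀ π ∈ Ps, K.IsPath π) (i : ℕ) : ∀ π ∈ pshift Ps i, K.IsPath π := by
  rintro _ ⟨π, hπ, rfl⟩ j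
  have := hPs π hπ (i + j)
  simpa [Nat.add_assoc] using this

lemma singleton_macro {AP S : Type} (K : Kripke AP S) {π : ℕ → S}
    (h : K.IsPath π) : K.IsMacroPath (fun i => {π i}) := by
  intro i
  constructor
  · intro s hs
    simp only [Set.mem_singleton_iff] at hs
    subst hs
    exact ⟨π (i + 1), rfl, h i⟩
  · intro s hs
    simp only [Set.mem_singleton_iff] at hs
    subst hs
    exact ⟨π i, rfl, h i⟩

lemma positive_team_iff_mp_aux {AP S : Type} (K : Kripke AP S) (φ : InqForm AP) :
    φ.isPositive → ∀ Ps : Set (ℕ → S), (∀ π ∈ Ps, K.IsPath π) →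
      (φ.sat (K.teamOf Ps) ↔ K.msat φ (mp Ps)) := by
  induction φ with
  | bot =>
    intro _ Ps hPs
    simp only [InqForm.sat, Kripke.msat]
    constructor
    · intro h
      have hPsE : Ps = ∅ := by
        by_contra hne
        obtain ⟨π, hπ⟩ := Set.nonempty_iff_ne_empty.2 hne
        have : K.traceOf π ∈ K.teamOf Ps := ⟨π, hπ, rfl⟩
        rw [h] at this
        exact this
      subst hPsE
      ext π
      simp only [Set.mem_empty_iff_false, iff_false]
      rintro ⟨_, h0⟩
      have := h0 0
      simp [mp] at this
    · intro h
      have hPsE : Ps = ∅ := by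
        by_contra hne
        obtain ⟨π, hπ⟩ := Set.nonempty_iff_ne_empty.2 hne
        have : π ∈ K.PathsIn (mp Ps) := ⟨hPs π hπ, fun i => ⟨π, hπ, rfl⟩⟩
        rw [h] at this
        exact this
      subst hPsE
      simp [Kripke.teamOf]
  | atom p =>
    intro _ Ps hPs
    simp only [InqForm.sat, Kripke.msat]
    constructor
    · rintro h s ⟨π, hπ, rfl⟩
      exact h (K.traceOf π) ⟨π, hπ, rfl⟩
    · rintro h w ⟨π, hπ, rfl⟩
      exact h (π 0) ⟨π, hπ, rfl⟩
  | or φ ψ ihφ ihψ =>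
    intro hφ Ps hPs
    simp only [InqForm.sat, Kripke.msat, ihφ hφ.1 Ps hPs, ihψ hφ.2 Ps hPs]
  | and φ ψ ihφ ihψ =>
    intro hφ Ps hPs
    simp only [InqForm.sat, Kripke.msat, ihφ hφ.1 Ps hPs, ihψ hφ.2 Ps hPs]
  | imp φ ψ ihφ ihψ =>
    intro hφ Ps hPs
    cases φ with
    | atom p =>
      cases ψ with
      | bot =>
        simp only [InqForm.sat, Kripke.msat]
        constructor
        · intro h ρ' hmp hsub hp
          ext π
          simp only [Set.mem_empty_iff_false, iff_false]
          intro hπ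
          have h0 : π 0 ∈ mp Ps 0 := hsub 0 (hπ.2 0)
          obtain ⟨π₀, hπ₀, h00⟩ := h0
          have hsub' : {K.traceOf π₀} ⊆ K.teamOf Ps := by
            intro w hw
            simp only [Set.mem_singleton_iff] at hw
            exact hw ▸ ⟨π₀, hπ₀, rfl⟩
          have hsat : ∀ w ∈ ({K.traceOf π₀} : Team AP), p ∈ w 0 := by
            intro w hw
            simp only [Set.mem_singleton_iff] at hw
            subst hw
            have := hp (π 0) (hπ.2 0)
            simpa [Kripke.traceOf, h00] using this
          have := h _ hsub' hsat
          simp at this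
        · intro h L' hsub hp
          by_contra hne
          obtain ⟨w, hw⟩ := Set.nonempty_iff_ne_empty.2 hne
          obtain ⟨π, hπ, rfl⟩ := hsub hw
          have hmac := singleton_macro K (hPs π hπ)
          have hsub' : ∀ i, ({π i} : Set S) ⊆ mp Ps i := by
            intro i s hs
            simp only [Set.mem_singleton_iff] at hs
            exact hs ▸ ⟨π, hπ, rfl⟩
          have hpρ : ∀ s ∈ ({π 0} : Set S), p ∈ K.lab s := by
            intro s hs
            simp only [Set.mem_singleton_iff] at hs
            subst hs
            exact hp _ hw
          have := h _ hmac hsub' hpρ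
          have hmem : π ∈ K.PathsIn (fun i => ({π i} : Set S)) :=
            ⟨hPs π hπ, fun i => rfl⟩
          rw [this] at hmem
          exact hmem
      | atom q => exact absurd hφ (by simp [InqForm.isPositive])
      | or _ _ => exact absurd hφ (by simp [InqForm.isPositive])
      | and _ _ => exact absurd hφ (by simp [InqForm.isPositive])
      | imp _ _ => exact absurd hφ (by simp [InqForm.isPositive])
      | next _ => exact absurd hφ (by simp [InqForm.isPositive])
      | untl _ _ => exact absurd hφ (by simp [InqForm.isPositive])
      | rel _ _ => exact absurd hφ (by simp [InqForm.isPositive])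
    | bot => exact absurd hφ (by simp [InqForm.isPositive])
    | or _ _ => exact absurd hφ (by simp [InqForm.isPositive])
    | and _ _ => exact absurd hφ (by simp [InqForm.isPositive])
    | imp _ _ => exact absurd hφ (by simp [InqForm.isPositive])
    | next _ => exact absurd hφ (by simp [InqForm.isPositive])
    | untl _ _ => exact absurd hφ (by simp [InqForm.isPositive])
    | rel _ _ => exact absurd hφ (by simp [InqForm.isPositive])
  | next φ ihφ =>
    intro hφ Ps hPs
    simp only [InqForm.sat, Kripke.msat]
    rw [teamOf_pshift, ← mp_pshift]
    exact ihφ hφ _ (pshift_paths K hPs 1)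
  | untl φ ψ ihφ ihψ =>
    intro hφ Ps hPs
    have H : ∀ (χ : InqForm AP), χ.isPositive →
        (∀ Ps : Set (ℕ → S), (∀ π ∈ Ps, K.IsPath π) →
          (χ.sat (K.teamOf Ps) ↔ K.msat χ (mp Ps))) → ∀ i,
        (χ.sat ((K.teamOf Ps).shift i) ↔ K.msat χ (mshift (mp Ps) i)) := by
      intro χ hχ ih i
      rw [teamOf_pshift, ← mp_pshift]
      exact ih _ (pshift_paths K hPs i)
    simp only [InqForm.sat, Kripke.msat]
    exact exists_congr fun i =>
      and_congr (H ψ hφ.2 (ihψ hφ.2) i) (forall₂_congr fun k _ => H φ hφ.1 (ihφ hφ.1) k)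
  | rel φ ψ ihφ ihψ =>
    intro hφ Ps hPs
    have H : ∀ (χ : InqForm AP), χ.isPositive →
        (∀ Ps : Set (ℕ → S), (∀ π ∈ Ps, K.IsPath π) →
          (χ.sat (K.teamOf Ps) ↔ K.msat χ (mp Ps))) → ∀ i,
        (χ.sat ((K.teamOf Ps).shift i) ↔ K.msat χ (mshift (mp Ps) i)) := by
      intro χ hχ ih i
      rw [teamOf_pshift, ← mp_pshift]
      exact ih _ (pshift_paths K hPs i)
    simp only [InqForm.sat, Kripke.msat]
    exact forall_congr' fun i =>
      or_congr (H ψ hφ.2 (ihψ hφ.2) i)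
        (exists_congr fun k => and_congr_right fun _ => H φ hφ.1 (ihφ hφ.1) k)

/-- for positive InqLTL formulas, the team semantics on a set `Π` of
paths agrees with the macro-path semantics on its abstraction `mp(Π)`. -/
theorem positive_team_iff_mp {AP S : Type} [Fintype AP] (K : Kripke AP S)
    (φ : InqForm AP) (hφ : φ.isPositive) (Ps : Set (ℕ → S))
    (hPs : ∀ π ∈ Ps, K.IsPath π) :
    φ.sat (K.teamOf Ps) ↔ K.msat φ (mp Ps) := by
  exact positive_team_iff_mp_aux K φ hφ Ps hPs
end

section
/- For every Kripke structure K with initial macro-path ρ0 and every left-positive InqLTL formula φ: ρ0 ⊨_K φ under the macro-path semantics if and only if L(K) ⊨ φ under the InqLTL team semantics, where L(K) is the set of traces induced by the initial paths of K. -/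
/-- Left-positive InqLTL formulas:
`φ ::= ⊥ | p | ¬ξ | φ ⊕ φ | φ ∧ φ | ψ → φ | X φ | φ U φ | φ R φ`,
where `ξ` is an arbitrary InqLTL formula, `ψ` is a positive InqLTL formula, and
`¬ξ` abbreviates `ξ → ⊥`. -/
def InqForm.isLeftPositive {AP : Type} : InqForm AP → Prop
  | .bot => True
  | .atom _ => True
  | .imp ψ φ => φ = .bot ∨ (ψ.isPositive ∧ φ.isLeftPositive)
  | .or φ ψ => φ.isLeftPositive ∧ ψ.isLeftPositive
  | .and φ ψ => φ.isLeftPositive ∧ ψ.isLeftPositive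
  | .next φ => φ.isLeftPositive
  | .untl φ ψ => φ.isLeftPositive ∧ ψ.isLeftPositive
  | .rel φ ψ => φ.isLeftPositive ∧ ψ.isLeftPositive

/-- The initial macro-path `ρ0` of `K`: `ρ0(0) = S0` and `ρ0(i+1)` is the set of
`R`-successors of the states in `ρ0(i)`. -/
def Kripke.initMacro {AP S : Type} (K : Kripke AP S) : ℕ → Set S
  | 0 => K.init
  | i + 1 => {s' | ∃ s ∈ K.initMacro i, K.R s s'}

/-- `L(K)`: the team of traces induced by the initial paths of `K`. -/
def Kripke.teamOfInit {AP S : Type} (K : Kripke AP S) : Team AP :=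
  K.teamOf {π | K.IsPath π ∧ π 0 ∈ K.init}

/-! For a macro-path `ρ` write `L ρ` for the team `L_K(Paths_K(ρ))`. Every state of a macro-path
lies on one of its paths, so `L ρ` carries the labels of `ρ` and `L ρ≥i = (L ρ)≥i`; hence the
two semantics can only differ at implications. For `¬ξ` both sides are flat and reduce to single
paths, where the sub-macro-paths of a path (itself and the empty one) match the subteams of its
trace. For `ψ → φ` with `ψ` positive, a subteam `L' ⊆ L ρ` satisfying `ψ` is matched by the
macro-path spanned by the paths of `L'`: positive formulas only inspect the states such a
macro-path visits, so they do not notice the extra paths it encodes. -/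

section
variable {AP S : Type}

theorem InqForm.isPositive_imp_iff {φ ψ : InqForm AP} :
    (φ.imp ψ).isPositive ↔ (∃ p, φ = .atom p) ∧ ψ = .bot := by
  cases φ <;> cases ψ <;> simp [InqForm.isPositive]

theorem InqForm.isPositive.isLeftPositive {φ : InqForm AP} (h : φ.isPositive) :
    φ.isLeftPositive := by
  induction φ with
  | imp φ ψ =>
    obtain ⟨-, rfl⟩ := InqForm.isPositive_imp_iff.1 h
    exact Or.inl rfl
  | bot | atom => trivial
  | next φ ih => exact ih h
  | or φ ψ ihφ ihψ | and φ ψ ihφ ihψ | untl φ ψ ihφ ihψ | rel φ ψ ihφ ihψ =>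
    exact ⟨ihφ h.1, ihψ h.2⟩

theorem Team.shift_mono_s17 {L L' : Team AP} (h : L' ⊆ L) (i : ℕ) : L'.shift i ⊆ L.shift i :=
  Set.image_mono h

theorem InqForm.sat_of_subset (φ : InqForm AP) {L L' : Team AP} (h : L' ⊆ L)
    (hL : φ.sat L) : φ.sat L' := by
  induction φ generalizing L L' with
  | bot => exact Set.subset_empty_iff.1 (hL ▸ h)
  | atom p => exact fun w hw => hL w (h hw)
  | or φ ψ ihφ ihψ => exact hL.imp (ihφ h) (ihψ h)
  | and φ ψ ihφ ihψ => exact ⟨ihφ h hL.1, ihψ h hL.2⟩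
  | imp φ ψ => exact fun L'' hL'' => hL L'' (hL''.trans h)
  | next φ ih => exact ih (Team.shift_mono_s17 h 1) hL
  | untl φ ψ ihφ ihψ =>
    obtain ⟨i, hψ, hφ⟩ := hL
    exact ⟨i, ihψ (Team.shift_mono_s17 h i) hψ, fun k hk => ihφ (Team.shift_mono_s17 h k) (hφ k hk)⟩
  | rel φ ψ ihφ ihψ =>
    exact fun i => (hL i).imp (ihψ (Team.shift_mono_s17 h i))
      fun ⟨k, hk, hφ⟩ => ⟨k, hk, ihφ (Team.shift_mono_s17 h k) hφ⟩

theorem InqForm.sat_neg_iff_s17 {ξ : InqForm AP} {L : Team AP} :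
    (ξ.imp .bot).sat L ↔ ∀ w ∈ L, ¬ ξ.sat {w} := by
  refine ⟨fun h w hw hξ => Set.singleton_ne_empty w (h {w} (Set.singleton_subset_iff.2 hw) hξ),
    fun h L' hL' hξ => Set.eq_empty_of_forall_notMem fun w hw => ?_⟩
  exact h w (hL' hw) (ξ.sat_of_subset (Set.singleton_subset_iff.2 hw) hξ)

def pathShift (π : ℕ → S) (i : ℕ) : ℕ → S := fun j => π (i + j)

theorem pathShift_pathShift (π : ℕ → S) (i j : ℕ) :
    pathShift (pathShift π i) j = pathShift π (i + j) :=
  funext fun k => congrArg π (Nat.add_assoc i j k).symm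

theorem pathShift_zero (π : ℕ → S) : pathShift π 0 = π :=
  funext fun j => congrArg π (Nat.zero_add j)

theorem mshift_zero (ρ : ℕ → Set S) : mshift ρ 0 = ρ :=
  funext fun j => congrArg ρ (Nat.zero_add j)

def macroOfPaths (Ps : Set (ℕ → S)) : ℕ → Set S := fun i => (fun π => π i) '' Ps

theorem mshift_macroOfPaths (Ps : Set (ℕ → S)) (i : ℕ) :
    mshift (macroOfPaths Ps) i = macroOfPaths ((pathShift · i) '' Ps) := by
  funext j
  simp only [mshift, macroOfPaths, Set.image_image, pathShift]

variable (K : Kripke AP S)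

theorem Kripke.teamOf_image_pathShift (Ps : Set (ℕ → S)) (i : ℕ) :
    K.teamOf ((pathShift · i) '' Ps) = (K.teamOf Ps).shift i := by
  simp only [Kripke.teamOf, Team.shift, Set.image_image]
  rfl

theorem Kripke.pathsIn_mono {ρ ρ' : ℕ → Set S} (h : ρ' ≤ ρ) : K.PathsIn ρ' ⊆ K.PathsIn ρ :=
  fun _ hπ => ⟨hπ.1, fun i => h i (hπ.2 i)⟩

theorem Kripke.msat_of_le (φ : InqForm AP) {ρ ρ' : ℕ → Set S} (h : ρ' ≤ ρ)
    (hρ : K.msat φ ρ) : K.msat φ ρ' := by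
  induction φ generalizing ρ ρ' with
  | bot => exact Set.subset_empty_iff.1 (hρ ▸ K.pathsIn_mono h)
  | atom p => exact fun s hs => hρ s (h 0 hs)
  | or φ ψ ihφ ihψ => exact hρ.imp (ihφ h) (ihψ h)
  | and φ ψ ihφ ihψ => exact ⟨ihφ h hρ.1, ihψ h hρ.2⟩
  | imp φ ψ => exact fun ρ'' hρ'' h'' => hρ ρ'' hρ'' fun i => (h'' i).trans (h i)
  | next φ ih => exact ih (fun j => h (1 + j)) hρ
  | untl φ ψ ihφ ihψ =>
    obtain ⟨i, hψ, hφ⟩ := hρ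
    exact ⟨i, ihψ (fun j => h (i + j)) hψ, fun k hk => ihφ (fun j => h (k + j)) (hφ k hk)⟩
  | rel φ ψ ihφ ihψ =>
    exact fun i => (hρ i).imp (ihψ fun j => h (i + j))
      fun ⟨k, hk, hφ⟩ => ⟨k, hk, ihφ (fun j => h (k + j)) hφ⟩

theorem Kripke.isMacroPath_macroOfPaths {Ps : Set (ℕ → S)} (h : ∀ π ∈ Ps, K.IsPath π) :
    K.IsMacroPath (macroOfPaths Ps) := fun i =>
  ⟨fun _ ⟨π, hπ, hs⟩ => ⟨π (i + 1), ⟨π, hπ, rfl⟩, hs ▸ h π hπ i⟩,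
    fun _ ⟨π, hπ, hs⟩ => ⟨π i, ⟨π, hπ, rfl⟩, hs ▸ h π hπ i⟩⟩

theorem Kripke.subset_pathsIn_macroOfPaths {Ps : Set (ℕ → S)} (h : ∀ π ∈ Ps, K.IsPath π) :
    Ps ⊆ K.PathsIn (macroOfPaths Ps) :=
  fun π hπ => ⟨h π hπ, fun _ => ⟨π, hπ, rfl⟩⟩

theorem Kripke.macroOfPaths_le {Ps : Set (ℕ → S)} {ρ : ℕ → Set S} (h : Ps ⊆ K.PathsIn ρ) :
    macroOfPaths Ps ≤ ρ := by
  rintro i _ ⟨π, hπ, rfl⟩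
  exact (h hπ).2 i

theorem Kripke.isMacroPath_macroOfPaths_singleton {π : ℕ → S} (hπ : K.IsPath π) :
    K.IsMacroPath (macroOfPaths {π}) :=
  K.isMacroPath_macroOfPaths fun _ h => Set.mem_singleton_iff.1 h ▸ hπ

theorem Kripke.pathsIn_macroOfPaths_singleton {π : ℕ → S} (hπ : K.IsPath π) :
    K.PathsIn (macroOfPaths {π}) = {π} := by
  refine Set.Subset.antisymm (fun π' hπ' => funext fun i => ?_)
    (Set.singleton_subset_iff.2 ⟨hπ, fun _ => ⟨π, rfl, rfl⟩⟩)
  simpa [macroOfPaths, eq_comm] using hπ'.2 i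

theorem Kripke.IsMacroPath.shift {K : Kripke AP S} {ρ : ℕ → Set S} (hρ : K.IsMacroPath ρ)
    (i : ℕ) : K.IsMacroPath (mshift ρ i) := fun j => hρ (i + j)

namespace Kripke.IsMacroPath
variable {K} {ρ : ℕ → Set S} (hρ : K.IsMacroPath ρ)
include hρ

theorem exists_mem_pathsIn_of_mem_zero {s : S} (hs : s ∈ ρ 0) :
    ∃ π ∈ K.PathsIn ρ, π 0 = s := by
  choose next hnext hR using fun i (t : ρ i) => (hρ i).1 t t.2
  let σ : (i : ℕ) → ρ i := fun i =>
    @Nat.rec (fun i => ρ i) ⟨s, hs⟩ (fun i t => ⟨next i t, hnext i t⟩) i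
  exact ⟨fun i => σ i, ⟨fun i => hR i (σ i), fun i => (σ i).2⟩, rfl⟩

theorem exists_pathShift_eq {i : ℕ} {π' : ℕ → S} (hπ' : π' ∈ K.PathsIn (mshift ρ i)) :
    ∃ π ∈ K.PathsIn ρ, pathShift π i = π' := by
  induction i generalizing π' with
  | zero => exact ⟨π', by rwa [mshift_zero] at hπ', pathShift_zero π'⟩
  | succ i ih =>
    obtain ⟨s, hs, hR⟩ := (hρ i).2 (π' 0) (hπ'.2 0)
    let π₁ : ℕ → S := fun j => Nat.casesOn j s π'
    have hπ₁ : π₁ ∈ K.PathsIn (mshift ρ i) := by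
      constructor
      · rintro (_ | n)
        exacts [hR, hπ'.1 n]
      · rintro (_ | n)
        · exact hs
        · show π' n ∈ ρ (i + n + 1)
          rw [Nat.add_right_comm]
          exact hπ'.2 n
    obtain ⟨π, hπ, hπi⟩ := ih hπ₁
    refine ⟨π, hπ, funext fun j => ?_⟩
    rw [← pathShift_pathShift, hπi]
    show π₁ (1 + j) = π' j
    rw [Nat.add_comm]

theorem image_pathShift_pathsIn (i : ℕ) :
    (pathShift · i) '' K.PathsIn ρ = K.PathsIn (mshift ρ i) := by
  refine Set.Subset.antisymm ?_ fun π' hπ' => hρ.exists_pathShift_eq hπ'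
  rintro _ ⟨π, hπ, rfl⟩
  exact ⟨fun j => hπ.1 (i + j), fun j => hπ.2 (i + j)⟩

theorem teamOf_pathsIn_mshift (i : ℕ) :
    K.teamOf (K.PathsIn (mshift ρ i)) = (K.teamOf (K.PathsIn ρ)).shift i := by
  rw [← hρ.image_pathShift_pathsIn, K.teamOf_image_pathShift]

theorem msat_atom_iff (p : AP) :
    K.msat (.atom p) ρ ↔ (InqForm.atom p).sat (K.teamOf (K.PathsIn ρ)) := by
  refine ⟨fun h _ ⟨π, hπ, hw⟩ => hw ▸ h (π 0) (hπ.2 0), fun h s hs => ?_⟩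
  obtain ⟨π, hπ, rfl⟩ := hρ.exists_mem_pathsIn_of_mem_zero hs
  exact h (K.traceOf π) ⟨π, hπ, rfl⟩

end Kripke.IsMacroPath

theorem Kripke.msat_bot_iff (ρ : ℕ → Set S) :
    K.msat .bot ρ ↔ InqForm.bot.sat (K.teamOf (K.PathsIn ρ)) :=
  Set.image_eq_empty.symm

theorem Kripke.sat_imp_of_msat_imp {φ ψ : InqForm AP} {ρ : ℕ → Set S}
    (hcover : ∀ L' ⊆ K.teamOf (K.PathsIn ρ), φ.sat L' →
      ∃ ρ' ≤ ρ, K.IsMacroPath ρ' ∧ K.msat φ ρ' ∧ L' ⊆ K.teamOf (K.PathsIn ρ'))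
    (hψ : ∀ ρ' ≤ ρ, K.IsMacroPath ρ' → K.msat ψ ρ' → ψ.sat (K.teamOf (K.PathsIn ρ')))
    (h : K.msat (φ.imp ψ) ρ) : (φ.imp ψ).sat (K.teamOf (K.PathsIn ρ)) := by
  intro L' hL' hφ
  obtain ⟨ρ', hle, hρ', hφ', hL'ρ'⟩ := hcover L' hL' hφ
  exact ψ.sat_of_subset hL'ρ' (hψ ρ' hle hρ' (h ρ' hρ' hle hφ'))

theorem Kripke.msat_imp_of_sat_imp {φ ψ : InqForm AP} {ρ : ℕ → Set S}
    (hφ : ∀ ρ' ≤ ρ, K.IsMacroPath ρ' → K.msat φ ρ' → φ.sat (K.teamOf (K.PathsIn ρ')))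
    (hψ : ∀ ρ' ≤ ρ, K.IsMacroPath ρ' → ψ.sat (K.teamOf (K.PathsIn ρ')) → K.msat ψ ρ')
    (h : (φ.imp ψ).sat (K.teamOf (K.PathsIn ρ))) : K.msat (φ.imp ψ) ρ :=
  fun ρ' hρ' hle hφ' => hψ ρ' hle hρ'
    (h _ (Set.image_mono (K.pathsIn_mono hle)) (hφ ρ' hle hρ' hφ'))

theorem Kripke.exists_le_teamOf_pathsIn_eq {ρ : ℕ → Set S} (hρ : K.IsMacroPath ρ)
    (hsub : (K.PathsIn ρ).Subsingleton) {L' : Team AP} (hL' : L' ⊆ K.teamOf (K.PathsIn ρ)) :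
    ∃ ρ' ≤ ρ, K.IsMacroPath ρ' ∧ K.teamOf (K.PathsIn ρ') = L' := by
  rcases L'.eq_empty_or_nonempty with rfl | ⟨w, hw⟩
  · refine ⟨fun _ => ∅, fun _ => Set.empty_subset _, fun _ => ⟨nofun, nofun⟩, ?_⟩
    exact Set.image_eq_empty.2 (Set.eq_empty_of_forall_notMem fun _ hπ => hπ.2 0)
  · refine ⟨ρ, le_rfl, hρ, Set.Subset.antisymm (fun v hv => ?_) hL'⟩
    have hL : K.teamOf (K.PathsIn ρ) = {w} := (hsub.image K.traceOf).eq_singleton_of_mem (hL' hw)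
    exact (Set.mem_singleton_iff.1 (hL ▸ hv)) ▸ hw

theorem Kripke.IsMacroPath.subsingleton_pathsIn_mshift {K : Kripke AP S} {ρ : ℕ → Set S}
    (hρ : K.IsMacroPath ρ) (hsub : (K.PathsIn ρ).Subsingleton) (i : ℕ) :
    (K.PathsIn (mshift ρ i)).Subsingleton :=
  hρ.image_pathShift_pathsIn i ▸ hsub.image _

theorem Kripke.msat_iff_sat_of_subsingleton (φ : InqForm AP) {ρ : ℕ → Set S}
    (hρ : K.IsMacroPath ρ) (hsub : (K.PathsIn ρ).Subsingleton) :
    K.msat φ ρ ↔ φ.sat (K.teamOf (K.PathsIn ρ)) := by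
  induction φ generalizing ρ with
  | bot => exact K.msat_bot_iff ρ
  | atom p => exact hρ.msat_atom_iff p
  | or φ ψ ihφ ihψ => exact or_congr (ihφ hρ hsub) (ihψ hρ hsub)
  | and φ ψ ihφ ihψ => exact and_congr (ihφ hρ hsub) (ihψ hρ hsub)
  | imp φ ψ ihφ ihψ =>
    have hsub' {ρ'} (hle : ρ' ≤ ρ) := hsub.anti (K.pathsIn_mono hle)
    refine ⟨K.sat_imp_of_msat_imp (fun L' hL' hφ => ?_)
        fun ρ' hle hρ' => (ihψ hρ' (hsub' hle)).1,
      K.msat_imp_of_sat_imp (fun ρ' hle hρ' => (ihφ hρ' (hsub' hle)).1)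
        fun ρ' hle hρ' => (ihψ hρ' (hsub' hle)).2⟩
    obtain ⟨ρ', hle, hρ', rfl⟩ := K.exists_le_teamOf_pathsIn_eq hρ hsub hL'
    exact ⟨ρ', hle, hρ', (ihφ hρ' (hsub' hle)).2 hφ, subset_rfl⟩
  | next φ ih =>
    simp only [Kripke.msat, InqForm.sat, ← hρ.teamOf_pathsIn_mshift,
      ih (hρ.shift 1) (hρ.subsingleton_pathsIn_mshift hsub 1)]
  | untl φ ψ ihφ ihψ =>
    simp only [Kripke.msat, InqForm.sat, ← hρ.teamOf_pathsIn_mshift,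
      fun i => ihφ (hρ.shift i) (hρ.subsingleton_pathsIn_mshift hsub i),
      fun i => ihψ (hρ.shift i) (hρ.subsingleton_pathsIn_mshift hsub i)]
  | rel φ ψ ihφ ihψ =>
    simp only [Kripke.msat, InqForm.sat, ← hρ.teamOf_pathsIn_mshift,
      fun i => ihφ (hρ.shift i) (hρ.subsingleton_pathsIn_mshift hsub i),
      fun i => ihψ (hρ.shift i) (hρ.subsingleton_pathsIn_mshift hsub i)]

theorem Kripke.msat_macroOfPaths_of_sat {ψ : InqForm AP} (hψ : ψ.isPositive)
    {Ps : Set (ℕ → S)} (h : ψ.sat (K.teamOf Ps)) : K.msat ψ (macroOfPaths Ps) := by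
  induction ψ generalizing Ps with
  | bot =>
    obtain rfl : Ps = ∅ := Set.image_eq_empty.1 h
    exact Set.eq_empty_of_forall_notMem fun _ hπ => by simpa [macroOfPaths] using hπ.2 0
  | atom p =>
    rintro _ ⟨π, hπ, rfl⟩
    exact h _ ⟨π, hπ, rfl⟩
  | imp φ χ =>
    obtain ⟨⟨p, rfl⟩, rfl⟩ := InqForm.isPositive_imp_iff.1 hψ
    refine fun ρ' _ hle hp => Set.eq_empty_of_forall_notMem fun π' hπ' => ?_
    obtain ⟨π, hπ, hπ0⟩ := hle 0 (hπ'.2 0)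
    refine InqForm.sat_neg_iff_s17.1 h _ ⟨π, hπ, rfl⟩ fun w hw => ?_
    rw [Set.mem_singleton_iff.1 hw]
    show p ∈ K.lab (π 0)
    rw [show π 0 = π' 0 from hπ0]
    exact hp _ (hπ'.2 0)
  | or φ χ ihφ ihχ => exact h.imp (ihφ hψ.1) (ihχ hψ.2)
  | and φ χ ihφ ihχ => exact ⟨ihφ hψ.1 h.1, ihχ hψ.2 h.2⟩
  | next φ ih =>
    simp only [InqForm.sat, ← K.teamOf_image_pathShift] at h
    simp only [Kripke.msat, mshift_macroOfPaths]
    exact ih hψ h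
  | untl φ χ ihφ ihχ =>
    simp only [InqForm.sat, ← K.teamOf_image_pathShift] at h
    simp only [Kripke.msat, mshift_macroOfPaths]
    obtain ⟨i, hχ, hφ⟩ := h
    exact ⟨i, ihχ hψ.2 hχ, fun k hk => ihφ hψ.1 (hφ k hk)⟩
  | rel φ χ ihφ ihχ =>
    simp only [InqForm.sat, ← K.teamOf_image_pathShift] at h
    simp only [Kripke.msat, mshift_macroOfPaths]
    exact fun i => (h i).imp (ihχ hψ.2) fun ⟨k, hk, hφ⟩ => ⟨k, hk, ihφ hψ.1 hφ⟩

theorem Kripke.exists_le_msat_of_isPositive {φ : InqForm AP} (hφ : φ.isPositive)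
    {ρ : ℕ → Set S} {L' : Team AP} (hL' : L' ⊆ K.teamOf (K.PathsIn ρ)) (h : φ.sat L') :
    ∃ ρ' ≤ ρ, K.IsMacroPath ρ' ∧ K.msat φ ρ' ∧ L' ⊆ K.teamOf (K.PathsIn ρ') := by
  set Ps := K.PathsIn ρ ∩ K.traceOf ⁻¹' L'
  have hPs : ∀ π ∈ Ps, K.IsPath π := fun π hπ => hπ.1.1
  have hteam : K.teamOf Ps = L' := by
    rw [Kripke.teamOf, Set.image_inter_preimage]
    exact Set.inter_eq_right.2 hL'
  exact ⟨macroOfPaths Ps, K.macroOfPaths_le Set.inter_subset_left,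
    K.isMacroPath_macroOfPaths hPs, K.msat_macroOfPaths_of_sat hφ (hteam ▸ h),
    hteam ▸ Set.image_mono (K.subset_pathsIn_macroOfPaths hPs)⟩

theorem Kripke.msat_neg_iff {ξ : InqForm AP} {ρ : ℕ → Set S} :
    K.msat (ξ.imp .bot) ρ ↔ ∀ π ∈ K.PathsIn ρ, ¬ K.msat ξ (macroOfPaths {π}) := by
  refine ⟨fun h π hπ hξ => ?_, fun h ρ' _ hle hξ => Set.eq_empty_of_forall_notMem fun π hπ => ?_⟩
  · have hle : macroOfPaths {π} ≤ ρ := K.macroOfPaths_le (Set.singleton_subset_iff.2 hπ)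
    have hempty := h _ (K.isMacroPath_macroOfPaths_singleton hπ.1) hle hξ
    exact Set.singleton_ne_empty π (K.pathsIn_macroOfPaths_singleton hπ.1 ▸ hempty)
  · have hle' : macroOfPaths {π} ≤ ρ' := K.macroOfPaths_le (Set.singleton_subset_iff.2 hπ)
    exact h π (K.pathsIn_mono hle hπ) (K.msat_of_le ξ hle' hξ)

theorem Kripke.msat_neg_iff_sat_neg (ξ : InqForm AP) (ρ : ℕ → Set S) :
    K.msat (ξ.imp .bot) ρ ↔ (ξ.imp .bot).sat (K.teamOf (K.PathsIn ρ)) := by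
  rw [K.msat_neg_iff, InqForm.sat_neg_iff_s17, Kripke.teamOf, Set.forall_mem_image]
  refine forall₂_congr fun π hπ => not_congr ?_
  have hpaths := K.pathsIn_macroOfPaths_singleton hπ.1
  rw [K.msat_iff_sat_of_subsingleton ξ (K.isMacroPath_macroOfPaths_singleton hπ.1)
    (by rw [hpaths]; exact Set.subsingleton_singleton), hpaths, Kripke.teamOf, Set.image_singleton]

theorem Kripke.IsMacroPath.msat_iff_sat {K : Kripke AP S} {φ : InqForm AP}
    (hφ : φ.isLeftPositive) {ρ : ℕ → Set S} (hρ : K.IsMacroPath ρ) :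
    K.msat φ ρ ↔ φ.sat (K.teamOf (K.PathsIn ρ)) := by
  induction φ generalizing ρ with
  | bot => exact K.msat_bot_iff ρ
  | atom p => exact hρ.msat_atom_iff p
  | or φ ψ ihφ ihψ => exact or_congr (ihφ hφ.1 hρ) (ihψ hφ.2 hρ)
  | and φ ψ ihφ ihψ => exact and_congr (ihφ hφ.1 hρ) (ihψ hφ.2 hρ)
  | imp φ ψ ihφ ihψ =>
    rcases hφ with rfl | ⟨hpos, hψ⟩
    · exact K.msat_neg_iff_sat_neg φ ρ
    · exact ⟨K.sat_imp_of_msat_imp (fun _ hL' h => K.exists_le_msat_of_isPositive hpos hL' h)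
          fun _ _ hρ' => (ihψ hψ hρ').1,
        K.msat_imp_of_sat_imp (fun _ _ hρ' => (ihφ hpos.isLeftPositive hρ').1)
          fun _ _ hρ' => (ihψ hψ hρ').2⟩
  | next φ ih =>
    simp only [Kripke.msat, InqForm.sat, ← hρ.teamOf_pathsIn_mshift, ih hφ (hρ.shift 1)]
  | untl φ ψ ihφ ihψ =>
    simp only [Kripke.msat, InqForm.sat, ← hρ.teamOf_pathsIn_mshift,
      fun i => ihφ hφ.1 (hρ.shift i), fun i => ihψ hφ.2 (hρ.shift i)]
  | rel φ ψ ihφ ihψ =>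
    simp only [Kripke.msat, InqForm.sat, ← hρ.teamOf_pathsIn_mshift,
      fun i => ihφ hφ.1 (hρ.shift i), fun i => ihψ hφ.2 (hρ.shift i)]

theorem Kripke.isMacroPath_initMacro : K.IsMacroPath K.initMacro := fun _ =>
  ⟨fun s hs => (K.leftTotal s).imp fun _ hR => ⟨⟨s, hs, hR⟩, hR⟩, fun _ hs' => hs'⟩

theorem Kripke.pathsIn_initMacro :
    K.PathsIn K.initMacro = {π | K.IsPath π ∧ π 0 ∈ K.init} := by
  refine Set.ext fun π => ⟨fun hπ => ⟨hπ.1, hπ.2 0⟩, fun hπ => ⟨hπ.1, fun i => ?_⟩⟩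
  induction i with
  | zero => exact hπ.2
  | succ i ih => exact ⟨π i, ih, hπ.1 i⟩

end

theorem leftPositive_initMacro_iff_teamOfInit_general {AP S : Type}
    (K : Kripke AP S) (φ : InqForm AP) (hφ : φ.isLeftPositive) :
    K.msat φ K.initMacro ↔ φ.sat K.teamOfInit := by
  rw [Kripke.teamOfInit, ← K.pathsIn_initMacro]
  exact K.isMacroPath_initMacro.msat_iff_sat hφ

/-- for left-positive InqLTL formulas, satisfaction of the initial
macro-path under the macro-path semantics coincides with team satisfaction by `L(K)`. -/
theorem leftPositive_initMacro_iff_teamOfInit {AP S : Type} [Fintype AP]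
    (K : Kripke AP S) (φ : InqForm AP) (hφ : φ.isLeftPositive) :
    K.msat φ K.initMacro ↔ φ.sat K.teamOfInit :=
  leftPositive_initMacro_iff_teamOfInit_general K φ hφ
end
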